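/- arXiv:2302.04845 — 4 statements merged into one kernel-verified Lean document; each statement's English description precedes it below -/
import Mathlib

section
/- Let k ≥ 2, let ℓ be an integer with 1 ≤ ℓ ≤ k−1, and let n be divisible by k. Then no k-graph in H_ext(n,k) contains a Hamilton (ℓ,k−ℓ)-cycle. (Consequently the minimum ℓ-degree condition δ_ℓ(H) > δ(n,k,ℓ) in the main theorem is best possible.) -/
open Finset

section Defs
variable {α : Type} [Fintype α] [DecidableEq α]

/-- The degree of a set `S` in a `k`-graph `H` : the number of `(k - |S|)`-element
subsets `T` of the complement of `S` with `S ∪ T ∈ H`. -/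
def hDeg (k : ℕ) (H : Finset (Finset α)) (S : Finset α) : ℕ :=
  ((Finset.powersetCard (k - S.card) (Finset.univ \ S)).filter (fun T => S ∪ T ∈ H)).card

/-- The minimum `j`-degree `δ_j(H)` of a `k`-graph `H`. -/
noncomputable def minDeg (k j : ℕ) (H : Finset (Finset α)) : ℕ :=
  sInf { d | ∃ S : Finset α, S.card = j ∧ hDeg k H S = d }

/-- `B_{n,k}(A,B)` : all `k`-element sets meeting `A` in an odd number of vertices. -/
def oddB (k : ℕ) (A : Finset α) : Finset (Finset α) :=
  (Finset.powersetCard k (Finset.univ : Finset α)).filter (fun e => Odd (e ∩ A).card)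

/-- `B̄_{n,k}(A,B)` : all `k`-element sets meeting `A` in an even number of vertices. -/
def evenB (k : ℕ) (A : Finset α) : Finset (Finset α) :=
  (Finset.powersetCard k (Finset.univ : Finset α)).filter (fun e => Even (e ∩ A).card)

/-- `P 0, P 1, …, P t` is an `(ℓ, k-ℓ)`-path in `H`. -/
def IsPath (k l : ℕ) (H : Finset (Finset α)) (t : ℕ) (P : ℕ → Finset α) : Prop :=
  (∀ i ≤ t, ∀ j ≤ t, i ≠ j → Disjoint (P i) (P j)) ∧
  (∀ i < t, P i ∪ P (i + 1) ∈ H) ∧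
  (∀ i < t, ((P i).card = l ∧ (P (i + 1)).card = k - l) ∨
            ((P i).card = k - l ∧ (P (i + 1)).card = l))

/-- The vertex set of the path `P 0, …, P t`. -/
def pathVerts (t : ℕ) (P : ℕ → Finset α) : Finset α :=
  (Finset.range (t + 1)).biUnion P

/-- `C` is a connector for the pair `(L, R)` in `H`. -/
def IsConnector (k l : ℕ) (H : Finset (Finset α)) (L R C : Finset α) : Prop :=
  Disjoint L R ∧ Disjoint L C ∧ Disjoint R C ∧ C.card = 2 * k ∧
  ∃ t P, IsPath k l H t P ∧ P 0 = L ∧ P t = R ∧ pathVerts t P = L ∪ R ∪ C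

/-- `H` contains a Hamilton `(ℓ, k-ℓ)`-cycle. -/
def HasHamCycle (k l : ℕ) (H : Finset (Finset α)) : Prop :=
  ∃ (t : ℕ) (L R : ℕ → Finset α), 1 ≤ t ∧
    (∀ i < t, (L i).card = l ∧ (R i).card = k - l) ∧
    (∀ i < t, ∀ j < t, i ≠ j → Disjoint (L i) (L j) ∧ Disjoint (R i) (R j)) ∧
    (∀ i < t, ∀ j < t, Disjoint (L i) (R j)) ∧
    ((Finset.range t).biUnion (fun i => L i ∪ R i) = Finset.univ) ∧
    (∀ i < t, L i ∪ R i ∈ H ∧ R i ∪ L ((i + 1) % t) ∈ H)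

/-- `S` is `a`-good in `H` with respect to `B` (on a vertex set of size `m`) : the number of
edges of `B \ H` containing `S` is at most `a * C(m - |S|, k - |S|)`. -/
def IsGood (k m : ℕ) (H B : Finset (Finset α)) (a : ℝ) (S : Finset α) : Prop :=
  (((B \ H).filter (fun e => S ⊆ e)).card : ℝ) ≤ a * ((m - S.card).choose (k - S.card) : ℝ)

end Defs

open scoped Classical in
/-- `δ(n,k,ℓ)` : the maximum of `δ_ℓ` over the extremal family `H_ext(n,k)`. -/
noncomputable def deltaExt (n k l : ℕ) : ℕ :=
  Finset.univ.sup (fun A : Finset (Fin n) =>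
    max (if Odd (((n / k : ℕ) : ℤ) - (A.card : ℤ)) then minDeg k l (oddB k A) else 0)
        (if Odd A.card then minDeg k l (evenB k A) else 0))

/-- `H` is `ε`-close to `B_{n,k}`. -/
def closeToB (ε : ℝ) (n k : ℕ) (H : Finset (Finset (Fin n))) : Prop :=
  ∃ A : Finset (Fin n), A.card = (n + 1) / 2 ∧
    ((symmDiff H (oddB k A)).card : ℝ) ≤ ε * (n : ℝ) ^ k

/-- `H` is `ε`-close to `B̄_{n,k}`. -/
def closeToBbar (ε : ℝ) (n k : ℕ) (H : Finset (Finset (Fin n))) : Prop :=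
  ∃ A : Finset (Fin n), A.card = (n + 1) / 2 ∧
    ((symmDiff H (evenB k A)).card : ℝ) ≤ ε * (n : ℝ) ^ k

lemma hamCycle_aux {n k l : ℕ} (hk : 2 ≤ k) (hl2 : l ≤ k - 1)
    (H : Finset (Finset (Fin n))) (A : Finset (Fin n))
    (h : HasHamCycle k l H) :
    ∃ (t : ℕ) (E : ℕ → Finset (Fin n)), n = t * k ∧ (∀ i < t, E i ∈ H) ∧
      A.card = ∑ i ∈ Finset.range t, ((E i : Finset (Fin n)) ∩ A).card := by
  obtain ⟨t, L, R, ht, hcard, hLL, hLR, hcover, hedge⟩ := h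
  have hdisj : ∀ i ∈ Finset.range t, ∀ j ∈ Finset.range t, i ≠ j →
      Disjoint (L i ∪ R i) (L j ∪ R j) := by
    intro i hi j hj hij
    simp only [Finset.mem_range] at hi hj
    have h1 := hLL i hi j hj hij
    exact Finset.disjoint_union_left.2
      ⟨Finset.disjoint_union_right.2 ⟨h1.1, hLR i hi j hj⟩,
       Finset.disjoint_union_right.2 ⟨(hLR j hj i hi).symm, h1.2⟩⟩
  refine ⟨t, fun i => L i ∪ R i, ?_, fun i hi => (hedge i hi).1, ?_⟩
  · have hc : ∀ i ∈ Finset.range t, (L i ∪ R i).card = k := by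
      intro i hi
      rw [Finset.mem_range] at hi
      rw [Finset.card_union_of_disjoint (hLR i hi i hi), (hcard i hi).1, (hcard i hi).2]
      omega
    have h1 : n = ∑ i ∈ Finset.range t, (L i ∪ R i).card := by
      rw [← Finset.card_biUnion hdisj, hcover, Finset.card_univ, Fintype.card_fin]
    rw [Finset.sum_congr rfl hc] at h1
    simpa [Finset.sum_const, Finset.card_range, mul_comm] using h1
  · have hA : A = (Finset.range t).biUnion (fun i => (L i ∪ R i) ∩ A) := by
      rw [← Finset.biUnion_inter, hcover, Finset.univ_inter]
    have hd2 : ∀ i ∈ Finset.range t, ∀ j ∈ Finset.range t, i ≠ j →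
        Disjoint ((L i ∪ R i) ∩ A) ((L j ∪ R j) ∩ A) := fun i hi j hj hij =>
      (hdisj i hi j hj hij).mono Finset.inter_subset_left Finset.inter_subset_left
    conv_lhs => rw [hA]
    exact Finset.card_biUnion hd2

/-- No member of the extremal family `H_ext(n,k)` contains a Hamilton `(ℓ,k-ℓ)`-cycle. -/
theorem stmt2 (k l n : ℕ) (hk : 2 ≤ k) (hl1 : 1 ≤ l) (hl2 : l ≤ k - 1) (hn : k ∣ n) :
    ∀ A : Finset (Fin n),
      (Odd (((n / k : ℕ) : ℤ) - (A.card : ℤ)) → ¬ HasHamCycle k l (oddB k A)) ∧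
      (Odd A.card → ¬ HasHamCycle k l (evenB k A)) := by
  intro A
  constructor
  · intro hodd hham
    obtain ⟨t, E, hn', hE, hsum⟩ := hamCycle_aux hk hl2 _ A hham
    have hterm : ∀ i ∈ Finset.range t, ((E i) ∩ A).card % 2 = 1 := by
      intro i hi
      rw [Finset.mem_range] at hi
      have := hE i hi
      simp only [oddB, Finset.mem_filter] at this
      exact Nat.odd_iff.1 this.2
    have hmod : A.card % 2 = t % 2 := by
      rw [hsum, Finset.sum_nat_mod, Finset.sum_congr rfl hterm]
      simp [Finset.sum_const, Finset.card_range]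
    have hkpos : 0 < k := by omega
    have htnk : n / k = t := by rw [hn']; exact Nat.mul_div_cancel t hkpos
    obtain ⟨m, hm⟩ := hodd
    rw [htnk] at hm
    omega
  · intro hodd hham
    obtain ⟨t, E, hn', hE, hsum⟩ := hamCycle_aux hk hl2 _ A hham
    have hterm : ∀ i ∈ Finset.range t, ((E i) ∩ A).card % 2 = 0 := by
      intro i hi
      rw [Finset.mem_range] at hi
      have := hE i hi
      simp only [evenB, Finset.mem_filter] at this
      exact Nat.even_iff.1 this.2
    have hmod : A.card % 2 = 0 := by
      rw [hsum, Finset.sum_nat_mod, Finset.sum_congr rfl hterm]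
      simp
    rw [Nat.odd_iff] at hodd
    omega
end

section
/- Let k, ℓ be integers with k ≥ 3 and k/2 ≤ ℓ ≤ k−1. There exists γ_0 = γ_0(k) > 0 such that for every 0 < γ ≤ γ_0 there exists n_0 with the following property for all n ≥ n_0. Let H be a k-graph on an n-element vertex set V. Write N = C(n,ℓ) and N' = C(n,k−ℓ); for an ℓ-element set L ⊆ V let N(L) = {R ⊆ V : |R| = k−ℓ, L∩R = ∅, L∪R ∈ H}, and for a (k−ℓ)-element set R ⊆ V let N(R) = {L ⊆ V : |L| = ℓ, L∩R = ∅, L∪R ∈ H}. Suppose that: (a) |N(L)| > (1/2 − γ/2)·N' for every ℓ-element set L; (b) |N(R)| > (1/2 − γ/2)·N for every (k−ℓ)-element set R; and (c) for every ℓ-element set L, the number of ℓ-element sets L' with |N(L) ∩ N(L')| ≥ γ·N' is at least (1/2 + γ)·N. Then for every pair of disjoint sets L, R ⊆ V with |L| = ℓ and |R| = k−ℓ, there are at least γ³·n^{2k} sets C ⊆ V that are connectors for (L,R). -/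
open Finset

/-! ### Auxiliary material for `stmt12` -/

section ConnAux
variable {α : Type} [Fintype α] [DecidableEq α]

lemma conn_choose_ratio (n j : ℕ) (h1 : 1 ≤ j) (h2 : j ≤ n) :
    (n - 1).choose (j - 1) * n = n.choose j * j := by
  obtain ⟨j, rfl⟩ := Nat.exists_eq_add_of_le h1
  obtain ⟨m, hm⟩ := Nat.exists_eq_add_of_le h2
  subst hm
  have := Nat.add_one_mul_choose_eq (j + m) j
  have e1 : 1 + j - 1 = j := by omega
  have e2 : 1 + j + m - 1 = j + m := by omega
  have e3 : 1 + j + m = j + m + 1 := by omega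
  have e4 : 1 + j = j + 1 := by omega
  rw [e1, e2, e3, e4, mul_comm ((j+m).choose j)]
  exact this

lemma conn_card_powersetCard_mem_le (j : ℕ) (w : α) :
    ((powersetCard j (univ : Finset α)).filter (fun T => w ∈ T)).card
      ≤ (Fintype.card α - 1).choose (j - 1) := by
  classical
  have h : ((powersetCard j (univ : Finset α)).filter (fun T => w ∈ T)).card
      ≤ (powersetCard (j - 1) ((univ : Finset α).erase w)).card := by
    apply Finset.card_le_card_of_injOn (fun T => T.erase w)
    · intro T hT
      simp only [Finset.mem_coe, Finset.mem_filter, Finset.mem_powersetCard] at hT ⊢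
      refine ⟨Finset.erase_subset_erase w (Finset.subset_univ T), ?_⟩
      rw [Finset.card_erase_of_mem hT.2, hT.1.2]
    · intro a ha b hb hab
      simp only [Finset.mem_coe, Finset.mem_filter] at ha hb
      have := congrArg (insert w) hab
      rwa [Finset.insert_erase ha.2, Finset.insert_erase hb.2] at this
  rw [Finset.card_powersetCard, Finset.card_erase_of_mem (Finset.mem_univ w),
    Finset.card_univ] at h
  exact h

lemma conn_card_filter_not_disjoint_le (j : ℕ) (W : Finset α) {p : Finset α → Prop}
    [DecidablePred p] (hp : ∀ T, p T → ¬ Disjoint T W)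
    (A : Finset (Finset α)) (hA : A ⊆ powersetCard j (univ : Finset α)) :
    (A.filter p).card ≤ W.card * (Fintype.card α - 1).choose (j - 1) := by
  classical
  have hsub : A.filter p ⊆
      W.biUnion (fun w => (powersetCard j (univ : Finset α)).filter (fun T => w ∈ T)) := by
    intro T hT
    rw [Finset.mem_filter] at hT
    obtain ⟨a, haT, haW⟩ := Finset.not_disjoint_iff.mp (hp T hT.2)
    exact Finset.mem_biUnion.mpr ⟨a, haW, Finset.mem_filter.mpr ⟨hA hT.1, haT⟩⟩
  calc (A.filter p).card ≤ _ := Finset.card_le_card hsub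
    _ ≤ ∑ w ∈ W, ((powersetCard j (univ : Finset α)).filter (fun T => w ∈ T)).card :=
        Finset.card_biUnion_le
    _ ≤ ∑ _w ∈ W, (Fintype.card α - 1).choose (j - 1) :=
        Finset.sum_le_sum (fun w _ => conn_card_powersetCard_mem_le j w)
    _ = W.card * (Fintype.card α - 1).choose (j - 1) := by
        rw [Finset.sum_const, smul_eq_mul]

lemma conn_card_filter_disjoint_lb (j : ℕ) (W : Finset α) {p : Finset α → Prop}
    [DecidablePred p] (hp : ∀ T, ¬ p T → ¬ Disjoint T W)
    (A : Finset (Finset α)) (hA : A ⊆ powersetCard j (univ : Finset α)) :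
    A.card ≤ (A.filter p).card + W.card * (Fintype.card α - 1).choose (j - 1) := by
  classical
  have h1 := Finset.card_filter_add_card_filter_not (s := A) (p := p)
  have h2 : (A.filter (fun T => ¬ p T)).card ≤ W.card * (Fintype.card α - 1).choose (j - 1) :=
    conn_card_filter_not_disjoint_le j W (fun T hT => hp T hT) A hA
  omega

set_option linter.unusedSectionVars false in
lemma conn_fiber_card_le
    (s : Finset (Σ _ : Finset α, Σ _ : Finset α, Σ _ : Finset α, Finset α))
    (C : Finset α)
    (hs : ∀ x ∈ s, x.1 ⊆ C ∧ x.2.1 ⊆ C ∧ x.2.2.1 ⊆ C ∧ x.2.2.2 ⊆ C) :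
    s.card ≤ 2 ^ C.card * 2 ^ C.card * 2 ^ C.card * 2 ^ C.card := by
  classical
  have h : s.card ≤ (C.powerset ×ˢ C.powerset ×ˢ C.powerset ×ˢ C.powerset).card := by
    apply Finset.card_le_card_of_injOn (fun x => (x.1, x.2.1, x.2.2.1, x.2.2.2))
    · intro x hx
      obtain ⟨h1, h2, h3, h4⟩ := hs x hx
      simp only [Finset.mem_coe, Finset.mem_product, Finset.mem_powerset]
      exact ⟨h1, h2, h3, h4⟩
    · rintro ⟨a1, a2, a3, a4⟩ - ⟨b1, b2, b3, b4⟩ - h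
      simp only [Prod.mk.injEq] at h
      obtain ⟨h1, h2, h3, h4⟩ := h
      subst h1; subst h2; subst h3; subst h4; rfl
  simpa [Finset.card_product, Finset.card_powerset, mul_assoc] using h

set_option linter.unusedSectionVars false in
lemma conn_isConnector_build (k l : ℕ) (hl : l ≤ k) (H : Finset (Finset α))
    (L p1 p2 p3 p4 R : Finset α)
    (cL : L.card = l) (c1 : p1.card = k - l) (c2 : p2.card = l) (c3 : p3.card = k - l)
    (c4 : p4.card = l) (cR : R.card = k - l)
    (dLR : Disjoint L R) (dL1 : Disjoint L p1) (dL2 : Disjoint L p2) (dL3 : Disjoint L p3)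
    (dL4 : Disjoint L p4) (dR1 : Disjoint R p1) (dR2 : Disjoint R p2) (dR3 : Disjoint R p3)
    (dR4 : Disjoint R p4) (d12 : Disjoint p1 p2) (d13 : Disjoint p1 p3) (d14 : Disjoint p1 p4)
    (d23 : Disjoint p2 p3) (d24 : Disjoint p2 p4) (d34 : Disjoint p3 p4)
    (e1 : L ∪ p1 ∈ H) (e2 : p1 ∪ p2 ∈ H) (e3 : p2 ∪ p3 ∈ H) (e4 : p3 ∪ p4 ∈ H)
    (e5 : p4 ∪ R ∈ H) :
    IsConnector k l H L R (p1 ∪ p2 ∪ (p3 ∪ p4)) := by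
  classical
  set C := p1 ∪ p2 ∪ (p3 ∪ p4) with hC
  have hcard : C.card = 2 * k := by
    rw [hC, Finset.card_union_of_disjoint, Finset.card_union_of_disjoint,
      Finset.card_union_of_disjoint d34, c1, c2, c3, c4]
    · omega
    · exact d12
    · rw [Finset.disjoint_union_right, Finset.disjoint_union_left]
      exact ⟨⟨d13, d23⟩, by rw [Finset.disjoint_union_left]; exact ⟨d14, d24⟩⟩
  refine ⟨dLR, ?_, ?_, hcard, 5, (fun i => if i = 0 then L else if i = 1 then p1 else
    if i = 2 then p2 else if i = 3 then p3 else if i = 4 then p4 else R), ⟨?_, ?_, ?_⟩,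
    rfl, rfl, ?_⟩
  · rw [hC]
    simp only [Finset.disjoint_union_right]
    exact ⟨⟨dL1, dL2⟩, dL3, dL4⟩
  · rw [hC]
    simp only [Finset.disjoint_union_right]
    exact ⟨⟨dR1, dR2⟩, dR3, dR4⟩
  · intro i hi j hj hne
    interval_cases i <;> interval_cases j <;>
      first
        | exact absurd rfl hne
        | exact dLR | exact dLR.symm | exact dL1 | exact dL1.symm | exact dL2 | exact dL2.symm
        | exact dL3 | exact dL3.symm | exact dL4 | exact dL4.symm | exact dR1 | exact dR1.symm
        | exact dR2 | exact dR2.symm | exact dR3 | exact dR3.symm | exact dR4 | exact dR4.symm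
        | exact d12 | exact d12.symm | exact d13 | exact d13.symm | exact d14 | exact d14.symm
        | exact d23 | exact d23.symm | exact d24 | exact d24.symm | exact d34 | exact d34.symm
  · intro i hi
    interval_cases i
    exacts [e1, e2, e3, e4, e5]
  · intro i hi
    interval_cases i
    exacts [Or.inl ⟨cL, c1⟩, Or.inr ⟨c1, c2⟩, Or.inl ⟨c2, c3⟩, Or.inr ⟨c3, c4⟩,
      Or.inl ⟨c4, cR⟩]
  · show (Finset.range 6).biUnion _ = _
    rw [show Finset.range 6 = ({0, 1, 2, 3, 4, 5} : Finset ℕ) by decide]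
    simp only [Finset.biUnion_insert, Finset.singleton_biUnion]
    show L ∪ (p1 ∪ (p2 ∪ (p3 ∪ (p4 ∪ R)))) = L ∪ R ∪ C
    ext a
    simp only [Finset.mem_union, hC]
    tauto

end ConnAux

lemma conn_half_pow_le_choose (n j : ℕ) (h : 2*j ≤ n) :
    ((n:ℝ)/2)^j ≤ (j.factorial : ℝ) * n.choose j := by
  have h1 : (((n + 1 - j : ℕ):ℝ)^j)/(j.factorial) ≤ n.choose j :=
    Nat.pow_le_choose j n
  have h2 : ((n:ℝ)/2)^j ≤ (((n + 1 - j : ℕ):ℝ))^j := by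
    apply pow_le_pow_left₀ (by positivity)
    have hj : j ≤ n + 1 := by omega
    have he : ((n + 1 - j : ℕ) : ℝ) = (n:ℝ) + 1 - j := by
      push_cast [hj]; ring
    rw [he]
    have : (j:ℝ) ≤ (n:ℝ)/2 := by
      have h3 : (2*j : ℕ) ≤ (n:ℕ) := h
      have h4 := (Nat.cast_le (α := ℝ)).mpr h3
      push_cast at h4; linarith
    linarith
  calc ((n:ℝ)/2)^j ≤ (((n+1-j:ℕ):ℝ))^j := h2
    _ = (j.factorial : ℝ) * (((((n+1-j:ℕ)):ℝ)^j)/(j.factorial)) := by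
        field_simp
    _ ≤ (j.factorial : ℝ) * n.choose j := by
        apply mul_le_mul_of_nonneg_left h1 (by positivity)

/-- the `(k-l)`-neighbourhood of an `l`-set. -/
def connNB (n k l : ℕ) (H : Finset (Finset (Fin n))) (S : Finset (Fin n)) :
    Finset (Finset (Fin n)) :=
  (Finset.powersetCard (k - l) (Finset.univ \ S)).filter (fun T => S ∪ T ∈ H)

/-- the `l`-neighbourhood of a `(k-l)`-set. -/
def connNA (n l : ℕ) (H : Finset (Finset (Fin n))) (S : Finset (Fin n)) :
    Finset (Finset (Fin n)) :=
  (Finset.powersetCard l (Finset.univ \ S)).filter (fun T => T ∪ S ∈ H)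

open scoped Classical in
/-- the set of `l`-sets whose neighbourhood has large intersection with that of `X`. -/
noncomputable def connSL (n k l : ℕ) (H : Finset (Finset (Fin n))) (γ : ℝ)
    (X : Finset (Fin n)) : Finset (Finset (Fin n)) :=
  (Finset.powersetCard l (Finset.univ : Finset (Fin n))).filter
    (fun L' => γ * (n.choose (k - l) : ℝ) ≤ ((connNB n k l H X ∩ connNB n k l H L').card : ℝ))

lemma conn_mem_NB {n k l : ℕ} {H : Finset (Finset (Fin n))} {S T : Finset (Fin n)} :
    T ∈ connNB n k l H S ↔ Disjoint T S ∧ T.card = k - l ∧ S ∪ T ∈ H := by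
  simp only [connNB, Finset.mem_filter, Finset.mem_powersetCard, Finset.subset_sdiff,
    Finset.subset_univ, true_and]
  tauto

lemma conn_mem_NA {n l : ℕ} {H : Finset (Finset (Fin n))} {S T : Finset (Fin n)} :
    T ∈ connNA n l H S ↔ Disjoint T S ∧ T.card = l ∧ T ∪ S ∈ H := by
  simp only [connNA, Finset.mem_filter, Finset.mem_powersetCard, Finset.subset_sdiff,
    Finset.subset_univ, true_and]
  tauto

lemma conn_NB_subset {n k l : ℕ} {H : Finset (Finset (Fin n))} (S : Finset (Fin n)) :
    connNB n k l H S ⊆ Finset.powersetCard (k - l) (Finset.univ : Finset (Fin n)) := by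
  intro T hT
  rw [conn_mem_NB] at hT
  rw [Finset.mem_powersetCard_univ]
  exact hT.2.1

lemma conn_NA_subset {n l : ℕ} {H : Finset (Finset (Fin n))} (S : Finset (Fin n)) :
    connNA n l H S ⊆ Finset.powersetCard l (Finset.univ : Finset (Fin n)) := by
  intro T hT
  rw [conn_mem_NA] at hT
  rw [Finset.mem_powersetCard_univ]
  exact hT.2.1

lemma conn_card_P0 (n j : ℕ) :
    (Finset.powersetCard j (Finset.univ : Finset (Fin n))).card = n.choose j := by
  rw [Finset.card_powersetCard, Finset.card_univ, Fintype.card_fin]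

lemma conn_NB_card_le {n k l : ℕ} {H : Finset (Finset (Fin n))} (S : Finset (Fin n)) :
    (connNB n k l H S).card ≤ n.choose (k - l) := by
  rw [← conn_card_P0 n (k - l)]
  exact Finset.card_le_card (conn_NB_subset S)

/-- swap lemma: the sets whose neighbourhood contains `R'` form `connNA R'`. -/
lemma conn_swap {n k l : ℕ} {H : Finset (Finset (Fin n))} {R' : Finset (Fin n)}
    (hR' : R'.card = k - l) [DecidablePred (fun L' => R' ∈ connNB n k l H L')] :
    (Finset.powersetCard l (Finset.univ : Finset (Fin n))).filter
      (fun L' => R' ∈ connNB n k l H L') = connNA n l H R' := by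
  ext L'
  simp only [Finset.mem_filter, Finset.mem_powersetCard_univ, conn_mem_NB, conn_mem_NA]
  constructor
  · rintro ⟨hcard, hdisj, -, hmem⟩
    exact ⟨hdisj.symm, hcard, hmem⟩
  · rintro ⟨hdisj, hcard, hmem⟩
    exact ⟨hcard, hdisj.symm, hR', hmem⟩

open scoped Classical in
/-- the double counting identity. -/
lemma conn_double_count {n k l : ℕ} {H : Finset (Finset (Fin n))} (X : Finset (Fin n)) :
    ∑ L' ∈ Finset.powersetCard l (Finset.univ : Finset (Fin n)),
      ((connNB n k l H X ∩ connNB n k l H L').card : ℝ)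
    = ∑ R' ∈ connNB n k l H X, ((connNA n l H R').card : ℝ) := by
  classical
  have hnat : ∑ L' ∈ Finset.powersetCard l (Finset.univ : Finset (Fin n)),
      (connNB n k l H X ∩ connNB n k l H L').card
      = ∑ R' ∈ connNB n k l H X, (connNA n l H R').card := by
    calc ∑ L' ∈ Finset.powersetCard l (Finset.univ : Finset (Fin n)),
          (connNB n k l H X ∩ connNB n k l H L').card
        = ∑ L' ∈ Finset.powersetCard l (Finset.univ : Finset (Fin n)),
            ∑ R' ∈ connNB n k l H X, if R' ∈ connNB n k l H L' then 1 else 0 := by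
          refine Finset.sum_congr rfl fun L' h => ?_
          rw [← Finset.filter_mem_eq_inter, Finset.card_filter]
      _ = ∑ R' ∈ connNB n k l H X,
            ∑ L' ∈ Finset.powersetCard l (Finset.univ : Finset (Fin n)),
              if R' ∈ connNB n k l H L' then 1 else 0 := Finset.sum_comm
      _ = ∑ R' ∈ connNB n k l H X, (connNA n l H R').card := by
          refine Finset.sum_congr rfl fun R' hR' => ?_
          rw [← Finset.card_filter, conn_swap (conn_mem_NB.mp hR').2.1]
  exact_mod_cast congrArg (Nat.cast : ℕ → ℝ) hnat


lemma conn_corr (γ c N kk nn : ℝ) (h : c * nn ≤ kk * N) (hk : 0 < kk) (hn : 0 < nn)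
    (hg : 16*kk^2 ≤ γ*nn) (hN : 0 ≤ N) (hc : 0 ≤ c) : 2*kk*c ≤ γ/8 * N := by
  have h1 : (2*kk*c)*nn ≤ (γ/8*N)*nn := by
    nlinarith [mul_le_mul_of_nonneg_left h (by linarith : (0:ℝ) ≤ 2*kk),
      mul_le_mul_of_nonneg_right hg hN]
  exact le_of_mul_le_mul_right h1 hn

open scoped Classical in
set_option maxHeartbeats 3000000 in
lemma conn_main_count (n k l : ℕ) (γ : ℝ) (H : Finset (Finset (Fin n)))
    (hk : 3 ≤ k) (hl1 : k ≤ 2 * l) (hl2 : l ≤ k - 1)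
    (hγ : 0 < γ) (hγ1 : γ ≤ 1/10)
    (hγD : γ * (128 * 2^(10*k) * ((k.factorial : ℝ))^2) ≤ 1)
    (hn1 : 1200*(k:ℝ)^2 ≤ (n:ℝ)) (hn2 : 16*(k:ℝ)^2 ≤ γ*(n:ℝ))
    (hA : ∀ L : Finset (Fin n), L.card = l →
            (1 / 2 - γ / 2) * (n.choose (k - l) : ℝ) < ((connNB n k l H L).card : ℝ))
    (hB : ∀ R : Finset (Fin n), R.card = k - l →
            (1 / 2 - γ / 2) * (n.choose l : ℝ) < ((connNA n l H R).card : ℝ))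
    (hC : ∀ L : Finset (Fin n), L.card = l →
            (1 / 2 + γ) * (n.choose l : ℝ) ≤ ((connSL n k l H γ L).card : ℝ))
    (L R : Finset (Fin n)) (hL : L.card = l) (hR : R.card = k - l) (hLR : Disjoint L R) :
    γ ^ 3 * (n : ℝ) ^ (2 * k) ≤
      ((Finset.univ.filter
        (fun C : Finset (Fin n) => IsConnector k l H L R C)).card : ℝ) := by
  classical
  -- basic numeric facts
  have hl0 : 2 ≤ l := by omega
  have hkl0 : 1 ≤ k - l := by omega
  have hlk : l ≤ k := by omega
  have hklk : k - l ≤ k := by omega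
  have hnk : 1200 * k^2 ≤ n := by
    have h2 : ((1200 * k^2 : ℕ) : ℝ) ≤ (n : ℝ) := by push_cast; linarith
    exact_mod_cast h2
  have hkn : 4*k ≤ n := by nlinarith
  have hln : l ≤ n := by omega
  have hkln : k - l ≤ n := by omega
  have hn0 : 0 < n := by omega
  have hnR : (0:ℝ) < n := by exact_mod_cast hn0
  have hNlpos : (0:ℝ) < (n.choose l : ℝ) := by exact_mod_cast Nat.choose_pos hln
  have hNrpos : (0:ℝ) < (n.choose (k - l) : ℝ) := by exact_mod_cast Nat.choose_pos hkln
  have hkR : (0:ℝ) < k := by exact_mod_cast (by omega : 0 < k)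
  -- corrections
  have hclb : ((n-1).choose (l-1) : ℝ) * n ≤ (k:ℝ) * (n.choose l : ℝ) := by
    have h := conn_choose_ratio n l (by omega) hln
    have hc : ((n-1).choose (l-1) : ℝ) * n = (n.choose l : ℝ) * l := by exact_mod_cast h
    have hlkR : (l:ℝ) ≤ k := by exact_mod_cast hlk
    nlinarith
  have hcrb : ((n-1).choose (k-l-1) : ℝ) * n ≤ (k:ℝ) * (n.choose (k - l) : ℝ) := by
    have h := conn_choose_ratio n (k-l) (by omega) hkln
    have hc : ((n-1).choose (k-l-1) : ℝ) * n = (n.choose (k-l) : ℝ) * (k-l : ℕ) := by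
      exact_mod_cast h
    have hlkR : ((k-l : ℕ):ℝ) ≤ k := by exact_mod_cast hklk
    nlinarith
  have hclpos : (0:ℝ) ≤ ((n-1).choose (l-1) : ℝ) := by positivity
  have hcrpos : (0:ℝ) ≤ ((n-1).choose (k-l-1) : ℝ) := by positivity
  have hcl8 : 2*(k:ℝ) * ((n-1).choose (l-1) : ℝ) ≤ γ/8 * (n.choose l : ℝ) :=
    conn_corr γ _ _ _ _ hclb hkR hnR hn2 (le_of_lt hNlpos) hclpos
  have hcr8 : 2*(k:ℝ) * ((n-1).choose (k-l-1) : ℝ) ≤ γ/8 * (n.choose (k - l) : ℝ) :=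
    conn_corr γ _ _ _ _ hcrb hkR hnR hn2 (le_of_lt hNrpos) hcrpos
  have hcl16 : (k:ℝ) * ((n-1).choose (l-1) : ℝ) ≤ γ/16 * (n.choose l : ℝ) := by linarith
  have hcr16 : (k:ℝ) * ((n-1).choose (k-l-1) : ℝ) ≤ γ/16 * (n.choose (k - l) : ℝ) := by
    linarith
  -- the four selection sets
  set A : Finset (Finset (Fin n)) :=
    (connSL n k l H γ L).filter (fun p2 => Disjoint p2 (L ∪ R)) with hAdef
  set Bf : Finset (Fin n) → Finset (Finset (Fin n)) :=
    fun p2 => (connNB n k l H L ∩ connNB n k l H p2).filter (fun p1 => Disjoint p1 R)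
    with hBfdef
  set Cf : Finset (Fin n) → Finset (Fin n) → Finset (Finset (Fin n)) :=
    fun p2 p1 => ((connSL n k l H γ p2) ∩ connNA n l H R).filter
      (fun p4 => Disjoint p4 (L ∪ p2 ∪ p1)) with hCfdef
  set Df : Finset (Fin n) → Finset (Fin n) → Finset (Fin n) → Finset (Finset (Fin n)) :=
    fun p2 p1 p4 => (connNB n k l H p2 ∩ connNB n k l H p4).filter
      (fun p3 => Disjoint p3 (L ∪ R ∪ p1)) with hDfdef
  -- inner bounds
  have h_innerD : ∀ p2 p1 p4 : Finset (Fin n), p1.card = k - l →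
      γ * (n.choose (k - l) : ℝ) ≤ ((connNB n k l H p2 ∩ connNB n k l H p4).card : ℝ) →
      γ/2 * (n.choose (k - l) : ℝ) ≤ ((Df p2 p1 p4).card : ℝ) := by
    intro p2 p1 p4 hp1c hov
    have hsub : connNB n k l H p2 ∩ connNB n k l H p4 ⊆
        Finset.powersetCard (k - l) (Finset.univ : Finset (Fin n)) :=
      Finset.inter_subset_left.trans (conn_NB_subset p2)
    have hW : (L ∪ R ∪ p1).card ≤ 2*k := by
      have h1 := Finset.card_union_le (L ∪ R) p1
      have h2 := Finset.card_union_le L R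
      omega
    have hnat := conn_card_filter_disjoint_lb (k - l) (L ∪ R ∪ p1)
        (p := fun p3 => Disjoint p3 (L ∪ R ∪ p1)) (fun T hT => hT)
        (connNB n k l H p2 ∩ connNB n k l H p4) hsub
    rw [Fintype.card_fin] at hnat
    have h1 : ((connNB n k l H p2 ∩ connNB n k l H p4).card : ℝ)
        ≤ ((Df p2 p1 p4).card : ℝ)
          + ((L ∪ R ∪ p1).card : ℝ) * ((n-1).choose (k-l-1) : ℝ) := by
      exact_mod_cast hnat
    have h2 : ((L ∪ R ∪ p1).card : ℝ) ≤ 2*(k:ℝ) := by exact_mod_cast hW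
    have h3 : ((L ∪ R ∪ p1).card : ℝ) * ((n-1).choose (k-l-1) : ℝ)
        ≤ 2*(k:ℝ) * ((n-1).choose (k-l-1) : ℝ) :=
      mul_le_mul_of_nonneg_right h2 hcrpos
    linarith
  have h_innerC : ∀ p2 p1 : Finset (Fin n), p2.card = l → p1.card = k - l →
      γ/4 * (n.choose l : ℝ) ≤ ((Cf p2 p1).card : ℝ) := by
    intro p2 p1 hp2c hp1c
    have hXsub : connSL n k l H γ p2
        ⊆ Finset.powersetCard l (Finset.univ : Finset (Fin n)) :=
      Finset.filter_subset _ _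
    have hUsub : connSL n k l H γ p2 ∪ connNA n l H R
        ⊆ Finset.powersetCard l (Finset.univ : Finset (Fin n)) :=
      Finset.union_subset hXsub (conn_NA_subset R)
    have hUcard : ((connSL n k l H γ p2 ∪ connNA n l H R).card : ℝ) ≤ (n.choose l : ℝ) := by
      exact_mod_cast le_trans (Finset.card_le_card hUsub) (le_of_eq (conn_card_P0 n l))
    have hIU := Finset.card_inter_add_card_union (connSL n k l H γ p2) (connNA n l H R)
    have hIUc : ((connSL n k l H γ p2 ∩ connNA n l H R).card : ℝ)
        + ((connSL n k l H γ p2 ∪ connNA n l H R).card : ℝ)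
        = ((connSL n k l H γ p2).card : ℝ) + ((connNA n l H R).card : ℝ) := by
      exact_mod_cast hIU
    have hbase : γ/2 * (n.choose l : ℝ)
        ≤ ((connSL n k l H γ p2 ∩ connNA n l H R).card : ℝ) := by
      have h1 := hC p2 hp2c
      have h2 := le_of_lt (hB R hR)
      linarith
    have hsub2 : connSL n k l H γ p2 ∩ connNA n l H R
        ⊆ Finset.powersetCard l (Finset.univ : Finset (Fin n)) :=
      Finset.inter_subset_left.trans hXsub
    have hW : (L ∪ p2 ∪ p1).card ≤ 2*k := by
      have h1 := Finset.card_union_le (L ∪ p2) p1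
      have h2 := Finset.card_union_le L p2
      omega
    have hnat := conn_card_filter_disjoint_lb l (L ∪ p2 ∪ p1)
        (p := fun p4 => Disjoint p4 (L ∪ p2 ∪ p1)) (fun T hT => hT)
        (connSL n k l H γ p2 ∩ connNA n l H R) hsub2
    rw [Fintype.card_fin] at hnat
    have h1 : ((connSL n k l H γ p2 ∩ connNA n l H R).card : ℝ)
        ≤ ((Cf p2 p1).card : ℝ)
          + ((L ∪ p2 ∪ p1).card : ℝ) * ((n-1).choose (l-1) : ℝ) := by
      exact_mod_cast hnat
    have h2 : ((L ∪ p2 ∪ p1).card : ℝ) ≤ 2*(k:ℝ) := by exact_mod_cast hW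
    have h3 : ((L ∪ p2 ∪ p1).card : ℝ) * ((n-1).choose (l-1) : ℝ)
        ≤ 2*(k:ℝ) * ((n-1).choose (l-1) : ℝ) :=
      mul_le_mul_of_nonneg_right h2 hclpos
    linarith
  have h_sumB : (n.choose l : ℝ) * (n.choose (k - l) : ℝ) / 16
      ≤ ∑ p2 ∈ A, ((Bf p2).card : ℝ) := by
    have hovle : ∀ L' : Finset (Fin n),
        ((connNB n k l H L ∩ connNB n k l H L').card : ℝ) ≤ (n.choose (k - l) : ℝ) := by
      intro L'
      exact_mod_cast le_trans
        (Finset.card_le_card (Finset.inter_subset_left (s₂ := connNB n k l H L')))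
        (conn_NB_card_le L)
    -- step 1 : total over all l-sets
    have hDC := conn_double_count (n := n) (k := k) (l := l) (H := H) L
    have hNBL : (1/2 - γ/2) * (n.choose (k - l) : ℝ) ≤ ((connNB n k l H L).card : ℝ) :=
      le_of_lt (hA L hL)
    have ht2 : (1/2 - γ/2) * (n.choose l : ℝ) * ((connNB n k l H L).card : ℝ)
        ≤ ∑ R' ∈ connNB n k l H L, ((connNA n l H R').card : ℝ) := by
      have h := Finset.card_nsmul_le_sum (connNB n k l H L)
          (fun R' => ((connNA n l H R').card : ℝ)) ((1/2 - γ/2) * (n.choose l : ℝ))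
          (fun R' hR' => le_of_lt (hB R' (conn_mem_NB.mp hR').2.1))
      rw [nsmul_eq_mul] at h
      rw [mul_comm ((1/2 - γ/2) * (n.choose l : ℝ))]
      exact h
    have hhalfpos : (0:ℝ) ≤ (1/2 - γ/2) * (n.choose l : ℝ) := by
      apply mul_nonneg (by linarith) (le_of_lt hNlpos)
    have ht2' : (1/2 - γ/2) * (n.choose l : ℝ) * ((1/2 - γ/2) * (n.choose (k - l) : ℝ))
        ≤ ∑ L' ∈ Finset.powersetCard l (Finset.univ : Finset (Fin n)),
            ((connNB n k l H L ∩ connNB n k l H L').card : ℝ) := by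
      rw [hDC]
      exact le_trans (mul_le_mul_of_nonneg_left hNBL hhalfpos) ht2
    -- step 2 : restrict to the partner set
    have hsplit := Finset.sum_filter_add_sum_filter_not
        (Finset.powersetCard l (Finset.univ : Finset (Fin n)))
        (fun L' => γ * (n.choose (k - l) : ℝ)
          ≤ ((connNB n k l H L ∩ connNB n k l H L').card : ℝ))
        (fun L' => ((connNB n k l H L ∩ connNB n k l H L').card : ℝ))
    have hnotbd : ∑ L' ∈ (Finset.powersetCard l (Finset.univ : Finset (Fin n))).filter
          (fun L' => ¬ (γ * (n.choose (k - l) : ℝ)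
            ≤ ((connNB n k l H L ∩ connNB n k l H L').card : ℝ))),
          ((connNB n k l H L ∩ connNB n k l H L').card : ℝ)
        ≤ (n.choose l : ℝ) * (γ * (n.choose (k - l) : ℝ)) := by
      have h1 := Finset.sum_le_card_nsmul
        ((Finset.powersetCard l (Finset.univ : Finset (Fin n))).filter
          (fun L' => ¬ (γ * (n.choose (k - l) : ℝ)
            ≤ ((connNB n k l H L ∩ connNB n k l H L').card : ℝ))))
        (fun L' => ((connNB n k l H L ∩ connNB n k l H L').card : ℝ))
        (γ * (n.choose (k - l) : ℝ))
        (fun L' hL' => le_of_lt (lt_of_not_ge (Finset.mem_filter.mp hL').2))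
      rw [nsmul_eq_mul] at h1
      have h2 : (((Finset.powersetCard l (Finset.univ : Finset (Fin n))).filter
          (fun L' => ¬ (γ * (n.choose (k - l) : ℝ)
            ≤ ((connNB n k l H L ∩ connNB n k l H L').card : ℝ)))).card : ℝ)
          ≤ (n.choose l : ℝ) := by
        exact_mod_cast le_trans (Finset.card_le_card (Finset.filter_subset _ _))
          (le_of_eq (conn_card_P0 n l))
      have h3 : (0:ℝ) ≤ γ * (n.choose (k - l) : ℝ) := by positivity
      exact le_trans h1 (mul_le_mul_of_nonneg_right h2 h3)
    have hSLsum : (1/2 - γ/2) * (n.choose l : ℝ) * ((1/2 - γ/2) * (n.choose (k - l) : ℝ))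
          - (n.choose l : ℝ) * (γ * (n.choose (k - l) : ℝ))
        ≤ ∑ L' ∈ connSL n k l H γ L,
            ((connNB n k l H L ∩ connNB n k l H L').card : ℝ) := by
      have : ∑ L' ∈ connSL n k l H γ L,
          ((connNB n k l H L ∩ connNB n k l H L').card : ℝ)
          = ∑ L' ∈ (Finset.powersetCard l (Finset.univ : Finset (Fin n))).filter
              (fun L' => γ * (n.choose (k - l) : ℝ)
                ≤ ((connNB n k l H L ∩ connNB n k l H L').card : ℝ)),
              ((connNB n k l H L ∩ connNB n k l H L').card : ℝ) := by
        simp only [connSL]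
      rw [this]
      linarith
    -- step 3 : restrict to A
    have hremA : ((connSL n k l H γ L).filter
          (fun p2 => ¬ Disjoint p2 (L ∪ R))).card
        ≤ (L ∪ R).card * (n-1).choose (l-1) := by
      have := conn_card_filter_not_disjoint_le l (L ∪ R)
        (p := fun p2 => ¬ Disjoint p2 (L ∪ R)) (fun T hT => hT)
        (connSL n k l H γ L) (Finset.filter_subset _ _)
      rwa [Fintype.card_fin] at this
    have hLRk : ((L ∪ R).card : ℝ) ≤ (k:ℝ) := by
      have h1 := Finset.card_union_le L R
      have h2 : (L ∪ R).card ≤ k := by omega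
      exact_mod_cast h2
    have hremA' : (((connSL n k l H γ L).filter
          (fun p2 => ¬ Disjoint p2 (L ∪ R))).card : ℝ)
        ≤ γ/16 * (n.choose l : ℝ) := by
      have h1 : (((connSL n k l H γ L).filter
          (fun p2 => ¬ Disjoint p2 (L ∪ R))).card : ℝ)
          ≤ ((L ∪ R).card : ℝ) * ((n-1).choose (l-1) : ℝ) := by exact_mod_cast hremA
      have h2 : ((L ∪ R).card : ℝ) * ((n-1).choose (l-1) : ℝ)
          ≤ (k:ℝ) * ((n-1).choose (l-1) : ℝ) := mul_le_mul_of_nonneg_right hLRk hclpos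
      linarith
    have hAsplit := Finset.sum_filter_add_sum_filter_not (connSL n k l H γ L)
        (fun p2 => Disjoint p2 (L ∪ R))
        (fun L' => ((connNB n k l H L ∩ connNB n k l H L').card : ℝ))
    have hnotA : ∑ L' ∈ (connSL n k l H γ L).filter (fun p2 => ¬ Disjoint p2 (L ∪ R)),
          ((connNB n k l H L ∩ connNB n k l H L').card : ℝ)
        ≤ (γ/16 * (n.choose l : ℝ)) * (n.choose (k - l) : ℝ) := by
      have h1 := Finset.sum_le_card_nsmul
        ((connSL n k l H γ L).filter (fun p2 => ¬ Disjoint p2 (L ∪ R)))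
        (fun L' => ((connNB n k l H L ∩ connNB n k l H L').card : ℝ))
        ((n.choose (k - l)) : ℝ) (fun L' _ => hovle L')
      rw [nsmul_eq_mul] at h1
      exact le_trans h1 (mul_le_mul_of_nonneg_right hremA' (le_of_lt hNrpos))
    have hAsum : (1/2 - γ/2) * (n.choose l : ℝ) * ((1/2 - γ/2) * (n.choose (k - l) : ℝ))
          - (n.choose l : ℝ) * (γ * (n.choose (k - l) : ℝ))
          - (γ/16 * (n.choose l : ℝ)) * (n.choose (k - l) : ℝ)
        ≤ ∑ p2 ∈ A, ((connNB n k l H L ∩ connNB n k l H p2).card : ℝ) := by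
      rw [hAdef]
      linarith
    -- step 4 : pass from the overlap to Bf
    have hBfbd : ∀ p2 ∈ A, ((connNB n k l H L ∩ connNB n k l H p2).card : ℝ)
        ≤ ((Bf p2).card : ℝ) + γ/16 * (n.choose (k - l) : ℝ) := by
      intro p2 _
      have hsub : connNB n k l H L ∩ connNB n k l H p2 ⊆
          Finset.powersetCard (k - l) (Finset.univ : Finset (Fin n)) :=
        Finset.inter_subset_left.trans (conn_NB_subset L)
      have hnat := conn_card_filter_disjoint_lb (k - l) R
          (p := fun p1 => Disjoint p1 R) (fun T hT => hT)
          (connNB n k l H L ∩ connNB n k l H p2) hsub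
      rw [Fintype.card_fin] at hnat
      have h1 : ((connNB n k l H L ∩ connNB n k l H p2).card : ℝ)
          ≤ ((Bf p2).card : ℝ) + (R.card : ℝ) * ((n-1).choose (k-l-1) : ℝ) := by
        exact_mod_cast hnat
      have h2 : (R.card : ℝ) ≤ (k:ℝ) := by
        have : R.card ≤ k := by omega
        exact_mod_cast this
      have h3 : (R.card : ℝ) * ((n-1).choose (k-l-1) : ℝ)
          ≤ (k:ℝ) * ((n-1).choose (k-l-1) : ℝ) := mul_le_mul_of_nonneg_right h2 hcrpos
      linarith
    have hAcard : ((A.card : ℕ) : ℝ) ≤ (n.choose l : ℝ) := by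
      have h1 : A ⊆ Finset.powersetCard l (Finset.univ : Finset (Fin n)) := by
        rw [hAdef]
        exact (Finset.filter_subset _ _).trans (Finset.filter_subset _ _)
      exact_mod_cast le_trans (Finset.card_le_card h1) (le_of_eq (conn_card_P0 n l))
    have hsum4 : ∑ p2 ∈ A, ((connNB n k l H L ∩ connNB n k l H p2).card : ℝ)
        ≤ ∑ p2 ∈ A, ((Bf p2).card : ℝ)
          + (n.choose l : ℝ) * (γ/16 * (n.choose (k - l) : ℝ)) := by
      have h1 : ∑ p2 ∈ A, ((connNB n k l H L ∩ connNB n k l H p2).card : ℝ)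
          ≤ ∑ p2 ∈ A, (((Bf p2).card : ℝ) + γ/16 * (n.choose (k - l) : ℝ)) :=
        Finset.sum_le_sum hBfbd
      rw [Finset.sum_add_distrib, Finset.sum_const, nsmul_eq_mul] at h1
      have h2 : (A.card : ℝ) * (γ/16 * (n.choose (k - l) : ℝ))
          ≤ (n.choose l : ℝ) * (γ/16 * (n.choose (k - l) : ℝ)) := by
        apply mul_le_mul_of_nonneg_right hAcard (by positivity)
      linarith
    -- assemble
    have hfinal : (n.choose l : ℝ) * (n.choose (k - l) : ℝ) / 16
        ≤ (1/2 - γ/2) * (n.choose l : ℝ) * ((1/2 - γ/2) * (n.choose (k - l) : ℝ))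
          - (n.choose l : ℝ) * (γ * (n.choose (k - l) : ℝ))
          - (γ/16 * (n.choose l : ℝ)) * (n.choose (k - l) : ℝ)
          - (n.choose l : ℝ) * (γ/16 * (n.choose (k - l) : ℝ)) := by
      have hNN : (0:ℝ) < (n.choose l : ℝ) * (n.choose (k - l) : ℝ) :=
        mul_pos hNlpos hNrpos
      nlinarith [hNN, hγ, hγ1, sq_nonneg γ]
    linarith
  -- the tuple set
  set s : Finset (Σ _ : Finset (Fin n), Σ _ : Finset (Fin n), Σ _ : Finset (Fin n),
      Finset (Fin n)) :=
    A.sigma (fun p2 => (Bf p2).sigma (fun p1 => (Cf p2 p1).sigma (fun p4 => Df p2 p1 p4)))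
    with hsdef
  have hA_card_l : ∀ p2 ∈ A, p2.card = l := by
    intro p2 hp2
    rw [hAdef, Finset.mem_filter] at hp2
    have := (Finset.mem_filter.mp hp2.1).1
    rwa [Finset.mem_powersetCard_univ] at this
  have hB_card : ∀ p2, ∀ p1 ∈ Bf p2, p1.card = k - l := by
    intro p2 p1 hp1
    rw [hBfdef, Finset.mem_filter, Finset.mem_inter] at hp1
    exact (conn_mem_NB.mp hp1.1.1).2.1
  have hC_ov : ∀ p2 p1, ∀ p4 ∈ Cf p2 p1,
      γ * (n.choose (k - l) : ℝ) ≤ ((connNB n k l H p2 ∩ connNB n k l H p4).card : ℝ) := by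
    intro p2 p1 p4 hp4
    rw [hCfdef, Finset.mem_filter, Finset.mem_inter] at hp4
    exact (Finset.mem_filter.mp hp4.1.1).2
  have hscard : γ^2 * ((n.choose l : ℝ) * (n.choose (k - l) : ℝ))^2 / 128 ≤ (s.card : ℝ) := by
    have hnatcard : s.card = ∑ p2 ∈ A, ∑ p1 ∈ Bf p2, ∑ p4 ∈ Cf p2 p1, (Df p2 p1 p4).card := by
      rw [hsdef, Finset.card_sigma]
      refine Finset.sum_congr rfl fun p2 _ => ?_
      rw [Finset.card_sigma]
      refine Finset.sum_congr rfl fun p1 _ => ?_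
      exact Finset.card_sigma _ _
    have hre : (s.card : ℝ)
        = ∑ p2 ∈ A, ∑ p1 ∈ Bf p2, ∑ p4 ∈ Cf p2 p1, ((Df p2 p1 p4).card : ℝ) := by
      rw [hnatcard]
      push_cast
      rfl
    have hinner : ∀ p2 ∈ A, ∀ p1 ∈ Bf p2,
        (γ/4 * (n.choose l : ℝ)) * (γ/2 * (n.choose (k - l) : ℝ))
          ≤ ∑ p4 ∈ Cf p2 p1, ((Df p2 p1 p4).card : ℝ) := by
      intro p2 hp2 p1 hp1
      have h1 := Finset.card_nsmul_le_sum (Cf p2 p1)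
          (fun p4 => ((Df p2 p1 p4).card : ℝ)) (γ/2 * (n.choose (k - l) : ℝ))
          (fun p4 hp4 => h_innerD p2 p1 p4 (hB_card p2 p1 hp1) (hC_ov p2 p1 p4 hp4))
      rw [nsmul_eq_mul] at h1
      have h2 := h_innerC p2 p1 (hA_card_l p2 hp2) (hB_card p2 p1 hp1)
      have h3 : (0:ℝ) ≤ γ/2 * (n.choose (k - l) : ℝ) := by positivity
      exact le_trans (mul_le_mul_of_nonneg_right h2 h3) h1
    have hmid : ∀ p2 ∈ A,
        ((Bf p2).card : ℝ) * ((γ/4 * (n.choose l : ℝ)) * (γ/2 * (n.choose (k - l) : ℝ)))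
          ≤ ∑ p1 ∈ Bf p2, ∑ p4 ∈ Cf p2 p1, ((Df p2 p1 p4).card : ℝ) := by
      intro p2 hp2
      have h1 := Finset.card_nsmul_le_sum (Bf p2)
          (fun p1 => ∑ p4 ∈ Cf p2 p1, ((Df p2 p1 p4).card : ℝ))
          ((γ/4 * (n.choose l : ℝ)) * (γ/2 * (n.choose (k - l) : ℝ)))
          (fun p1 hp1 => hinner p2 hp2 p1 hp1)
      rwa [nsmul_eq_mul] at h1
    have houter : (∑ p2 ∈ A, ((Bf p2).card : ℝ))
          * ((γ/4 * (n.choose l : ℝ)) * (γ/2 * (n.choose (k - l) : ℝ)))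
        ≤ (s.card : ℝ) := by
      rw [hre, Finset.sum_mul]
      exact Finset.sum_le_sum hmid
    have hcpos : (0:ℝ) ≤ (γ/4 * (n.choose l : ℝ)) * (γ/2 * (n.choose (k - l) : ℝ)) := by
      positivity
    have hfin : γ^2 * ((n.choose l : ℝ) * (n.choose (k - l) : ℝ))^2 / 128
        = ((n.choose l : ℝ) * (n.choose (k - l) : ℝ) / 16)
          * ((γ/4 * (n.choose l : ℝ)) * (γ/2 * (n.choose (k - l) : ℝ))) := by
      ring
    rw [hfin]
    exact le_trans (mul_le_mul_of_nonneg_right h_sumB hcpos) houter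
  -- from tuples to connectors
  have hconn : γ^2 * ((n.choose l : ℝ) * (n.choose (k - l) : ℝ))^2 / 128 / 2^(8*k)
      ≤ ((Finset.univ.filter
        (fun C : Finset (Fin n) => IsConnector k l H L R C)).card : ℝ) := by
    set f : (Σ _ : Finset (Fin n), Σ _ : Finset (Fin n), Σ _ : Finset (Fin n),
        Finset (Fin n)) → Finset (Fin n) :=
      fun x => x.2.1 ∪ x.1 ∪ (x.2.2.2 ∪ x.2.2.1) with hfdef
    have hmem_s : ∀ x ∈ s, x.1 ∈ A ∧ x.2.1 ∈ Bf x.1 ∧ x.2.2.1 ∈ Cf x.1 x.2.1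
        ∧ x.2.2.2 ∈ Df x.1 x.2.1 x.2.2.1 := by
      intro x hx
      rw [hsdef] at hx
      simp only [Finset.mem_sigma] at hx
      exact ⟨hx.1, hx.2.1, hx.2.2.1, hx.2.2.2⟩
    have hfconn : ∀ x ∈ s, f x ∈ Finset.univ.filter
        (fun C : Finset (Fin n) => IsConnector k l H L R C) := by
      rintro ⟨p2, p1, p4, p3⟩ hx
      obtain ⟨hp2, hp1, hp4, hp3⟩ := hmem_s _ hx
      have hp2c : p2.card = l := hA_card_l p2 hp2
      rw [hAdef, Finset.mem_filter] at hp2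
      have hp2LR := Finset.disjoint_union_right.mp hp2.2
      rw [hBfdef, Finset.mem_filter, Finset.mem_inter] at hp1
      obtain ⟨⟨hp1NBL, hp1NB2⟩, hp1R⟩ := hp1
      obtain ⟨hp1dL, hp1c, he1⟩ := conn_mem_NB.mp hp1NBL
      obtain ⟨hp1d2, -, he2⟩ := conn_mem_NB.mp hp1NB2
      rw [hCfdef, Finset.mem_filter, Finset.mem_inter] at hp4
      obtain ⟨⟨hp4SL, hp4NA⟩, hp4d⟩ := hp4
      have hp4c : p4.card = l := by
        have := (Finset.mem_filter.mp hp4SL).1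
        rwa [Finset.mem_powersetCard_univ] at this
      obtain ⟨hp4dR, -, he5⟩ := conn_mem_NA.mp hp4NA
      have hp4dLp2p1 := Finset.disjoint_union_right.mp hp4d
      have hp4dLp2 := Finset.disjoint_union_right.mp hp4dLp2p1.1
      rw [hDfdef, Finset.mem_filter, Finset.mem_inter] at hp3
      obtain ⟨⟨hp3NB2, hp3NB4⟩, hp3d⟩ := hp3
      obtain ⟨hp3d2, hp3c, he3⟩ := conn_mem_NB.mp hp3NB2
      obtain ⟨hp3d4, -, he4⟩ := conn_mem_NB.mp hp3NB4
      have hp3dLRp1 := Finset.disjoint_union_right.mp hp3d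
      have hp3dLR := Finset.disjoint_union_right.mp hp3dLRp1.1
      refine Finset.mem_filter.mpr ⟨Finset.mem_univ _, ?_⟩
      show IsConnector k l H L R (p1 ∪ p2 ∪ (p3 ∪ p4))
      exact conn_isConnector_build k l hlk H L p1 p2 p3 p4 R hL hp1c hp2c hp3c hp4c hR
        hLR hp1dL.symm hp2LR.1.symm hp3dLR.1.symm hp4dLp2.1.symm
        hp1R.symm hp2LR.2.symm hp3dLR.2.symm hp4dR.symm
        hp1d2 hp3dLRp1.2.symm hp4dLp2p1.2.symm hp3d2.symm hp4dLp2.2.symm hp3d4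
        he1 (by rwa [Finset.union_comm] at he2) he3 (by rwa [Finset.union_comm] at he4) he5
    have hcardfib := Finset.card_eq_sum_card_fiberwise
        (f := f) (s := s) (t := s.image f) (fun x hx => Finset.mem_image_of_mem f hx)
    have hfib : ∀ C ∈ s.image f, (s.filter (fun x => f x = C)).card
        ≤ 2^(2*k) * 2^(2*k) * 2^(2*k) * 2^(2*k) := by
      intro C hc
      obtain ⟨x0, hx0, hfx0⟩ := Finset.mem_image.mp hc
      have hC2k : C.card = 2*k := by
        have h1 := hfconn x0 hx0
        rw [Finset.mem_filter, hfx0] at h1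
        exact h1.2.2.2.2.1
      calc (s.filter (fun x => f x = C)).card
          ≤ 2^C.card * 2^C.card * 2^C.card * 2^C.card := by
            apply conn_fiber_card_le
            intro x hx
            rw [Finset.mem_filter] at hx
            have hfx : f x ≤ C := le_of_eq hx.2
            refine ⟨?_, ?_, ?_, ?_⟩
            · exact (Finset.subset_union_right.trans Finset.subset_union_left).trans hfx
            · exact (Finset.subset_union_left.trans Finset.subset_union_left).trans hfx
            · exact (Finset.subset_union_right.trans Finset.subset_union_right).trans hfx
            · exact (Finset.subset_union_left.trans Finset.subset_union_right).trans hfx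
        _ = 2^(2*k) * 2^(2*k) * 2^(2*k) * 2^(2*k) := by rw [hC2k]
    have hcount : s.card ≤ (s.image f).card * (2^(2*k) * 2^(2*k) * 2^(2*k) * 2^(2*k)) := by
      rw [hcardfib]
      have h1 := Finset.sum_le_card_nsmul (s.image f)
        (fun C => (s.filter (fun x => f x = C)).card)
        (2^(2*k) * 2^(2*k) * 2^(2*k) * 2^(2*k)) hfib
      simpa [smul_eq_mul] using h1
    have himgle : (s.image f).card ≤ (Finset.univ.filter
        (fun C : Finset (Fin n) => IsConnector k l H L R C)).card := by
      apply Finset.card_le_card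
      intro C hc
      obtain ⟨x, hx, rfl⟩ := Finset.mem_image.mp hc
      exact hfconn x hx
    have hMcast : ((2^(2*k) * 2^(2*k) * 2^(2*k) * 2^(2*k) : ℕ) : ℝ) = 2^(8*k) := by
      push_cast
      rw [← pow_add, ← pow_add, ← pow_add]
      congr 1
      omega
    have hreal : (s.card : ℝ) ≤ ((Finset.univ.filter
        (fun C : Finset (Fin n) => IsConnector k l H L R C)).card : ℝ) * 2^(8*k) := by
      have h1 : (s.card : ℝ) ≤ ((s.image f).card : ℝ)
          * ((2^(2*k) * 2^(2*k) * 2^(2*k) * 2^(2*k) : ℕ) : ℝ) := by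
        exact_mod_cast hcount
      rw [hMcast] at h1
      have h2 : ((s.image f).card : ℝ) ≤ ((Finset.univ.filter
          (fun C : Finset (Fin n) => IsConnector k l H L R C)).card : ℝ) := by
        exact_mod_cast himgle
      have h3 : (0:ℝ) ≤ (2:ℝ)^(8*k) := by positivity
      nlinarith
    rw [div_le_iff₀ (by positivity : (0:ℝ) < (2:ℝ)^(8*k))]
    linarith
  -- final numeric chain
  have hNlNr : (n:ℝ)^k ≤ 2^k * (k.factorial : ℝ)
      * ((n.choose l : ℝ) * (n.choose (k-l) : ℝ)) := by
    have hNl2 := conn_half_pow_le_choose n l (by omega)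
    have hNr2 := conn_half_pow_le_choose n (k-l) (by omega)
    have hprod : ((n:ℝ)/2)^l * ((n:ℝ)/2)^(k-l)
        ≤ ((l.factorial : ℝ) * ((k-l).factorial : ℝ))
          * ((n.choose l : ℝ) * (n.choose (k-l) : ℝ)) := by
      have h := mul_le_mul hNl2 hNr2 (by positivity) (by positivity)
      calc ((n:ℝ)/2)^l * ((n:ℝ)/2)^(k-l)
          ≤ ((l.factorial : ℝ) * (n.choose l : ℝ))
            * (((k-l).factorial : ℝ) * (n.choose (k-l) : ℝ)) := h
        _ = ((l.factorial : ℝ) * ((k-l).factorial : ℝ))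
            * ((n.choose l : ℝ) * (n.choose (k-l) : ℝ)) := by ring
    have hpowk : ((n:ℝ)/2)^l * ((n:ℝ)/2)^(k-l) = ((n:ℝ)/2)^k := by
      rw [← pow_add]
      congr 1
      omega
    have hfact : ((l.factorial : ℝ) * ((k-l).factorial : ℝ)) ≤ (k.factorial : ℝ) := by
      have h := Nat.le_of_dvd k.factorial_pos (Nat.factorial_mul_factorial_dvd_factorial hlk)
      exact_mod_cast h
    have hNN : (0:ℝ) ≤ (n.choose l : ℝ) * (n.choose (k-l) : ℝ) := by positivity
    have h2 : ((n:ℝ)/2)^k ≤ (k.factorial : ℝ)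
        * ((n.choose l : ℝ) * (n.choose (k-l) : ℝ)) := by
      rw [← hpowk]
      exact le_trans hprod (mul_le_mul_of_nonneg_right hfact hNN)
    have h3 : (n:ℝ)^k = 2^k * ((n:ℝ)/2)^k := by
      rw [← mul_pow]
      congr 1
      ring
    rw [h3, mul_assoc]
    exact mul_le_mul_of_nonneg_left h2 (by positivity)
  -- final chain
  have h2k : (n:ℝ)^(2*k) = ((n:ℝ)^k)^2 := by
    rw [show 2*k = k*2 by ring, pow_mul]
  have hsq : ((n:ℝ)^k)^2 ≤ (2^k * (k.factorial : ℝ)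
      * ((n.choose l : ℝ) * (n.choose (k-l) : ℝ)))^2 :=
    pow_le_pow_left₀ (by positivity) hNlNr 2
  have hcoef : γ * (2^k * (k.factorial : ℝ))^2 ≤ 1/(128 * 2^(8*k)) := by
    rw [le_div_iff₀ (by positivity)]
    have hexp : ((2:ℝ)^k * (k.factorial : ℝ))^2 * (128 * 2^(8*k))
        = 128 * 2^(10*k) * ((k.factorial : ℝ))^2 := by
      rw [mul_pow, ← pow_mul, show k*2 = 2*k by ring,
        show (10:ℕ)*k = 2*k + 8*k by omega, pow_add]
      ring
    calc γ * ((2:ℝ)^k * (k.factorial : ℝ))^2 * (128 * 2^(8*k))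
        = γ * (((2:ℝ)^k * (k.factorial : ℝ))^2 * (128 * 2^(8*k))) := by ring
      _ = γ * (128 * 2^(10*k) * ((k.factorial : ℝ))^2) := by rw [hexp]
      _ ≤ 1 := hγD
  have hQnn : (0:ℝ) ≤ γ^2 * ((n.choose l : ℝ) * (n.choose (k-l) : ℝ))^2 := by positivity
  calc γ ^ 3 * (n : ℝ) ^ (2 * k)
      = γ * (γ^2 * ((n:ℝ)^k)^2) := by rw [h2k]; ring
    _ ≤ γ * (γ^2 * (2^k * (k.factorial : ℝ)
          * ((n.choose l : ℝ) * (n.choose (k-l) : ℝ)))^2) := by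
        apply mul_le_mul_of_nonneg_left _ (le_of_lt hγ)
        apply mul_le_mul_of_nonneg_left hsq (by positivity)
    _ = (γ * (2^k * (k.factorial : ℝ))^2)
          * (γ^2 * ((n.choose l : ℝ) * (n.choose (k-l) : ℝ))^2) := by ring
    _ ≤ (1/(128 * 2^(8*k)))
          * (γ^2 * ((n.choose l : ℝ) * (n.choose (k-l) : ℝ))^2) :=
        mul_le_mul_of_nonneg_right hcoef hQnn
    _ = γ^2 * ((n.choose l : ℝ) * (n.choose (k-l) : ℝ))^2 / 128 / 2^(8*k) := by ring
    _ ≤ _ := hconn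

open scoped Classical in
/-- Connecting under the link-graph conditions (case (i) of Lemma 2.7). -/
theorem stmt12 (k l : ℕ) (hk : 3 ≤ k) (hl1 : k ≤ 2 * l) (hl2 : l ≤ k - 1) :
    ∃ γ0 : ℝ, 0 < γ0 ∧ ∀ γ : ℝ, 0 < γ → γ ≤ γ0 →
      ∃ n0 : ℕ, ∀ n : ℕ, n0 ≤ n →
        ∀ H : Finset (Finset (Fin n)), (∀ e ∈ H, e.card = k) →
          (∀ L : Finset (Fin n), L.card = l →
            (1 / 2 - γ / 2) * (n.choose (k - l) : ℝ) <
              (((Finset.powersetCard (k - l) (Finset.univ \ L)).filter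
                  (fun R => L ∪ R ∈ H)).card : ℝ)) →
          (∀ R : Finset (Fin n), R.card = k - l →
            (1 / 2 - γ / 2) * (n.choose l : ℝ) <
              (((Finset.powersetCard l (Finset.univ \ R)).filter
                  (fun L => L ∪ R ∈ H)).card : ℝ)) →
          (∀ L : Finset (Fin n), L.card = l →
            (1 / 2 + γ) * (n.choose l : ℝ) ≤
              ((Finset.univ.filter (fun L' : Finset (Fin n) => L'.card = l ∧
                γ * (n.choose (k - l) : ℝ) ≤
                  (((((Finset.powersetCard (k - l) (Finset.univ \ L)).filter
                        (fun R => L ∪ R ∈ H))) ∩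
                    (((Finset.powersetCard (k - l) (Finset.univ \ L')).filter
                        (fun R => L' ∪ R ∈ H)))).card : ℝ))).card : ℝ)) →
          ∀ L R : Finset (Fin n), L.card = l → R.card = k - l → Disjoint L R →
            γ ^ 3 * (n : ℝ) ^ (2 * k) ≤
              ((Finset.univ.filter
                (fun C : Finset (Fin n) => IsConnector k l H L R C)).card : ℝ) := by
  have hDpos : (0:ℝ) < 128 * 2^(10*k) * ((k.factorial : ℝ))^2 := by positivity
  refine ⟨min (1/10) (1/(128 * 2^(10*k) * ((k.factorial : ℝ))^2)), ?_, ?_⟩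
  · apply lt_min (by norm_num)
    positivity
  intro γ hγ hγle
  refine ⟨1200*k^2 + Nat.ceil ((16*(k:ℝ)^2)/γ) + 1, ?_⟩
  intro n hn H hHk hA hB hC L R hL hR hLR
  have hγ1 : γ ≤ 1/10 := hγle.trans (min_le_left _ _)
  have hγD : γ * (128 * 2^(10*k) * ((k.factorial : ℝ))^2) ≤ 1 := by
    have h1 : γ ≤ 1/(128 * 2^(10*k) * ((k.factorial : ℝ))^2) :=
      hγle.trans (min_le_right _ _)
    rw [le_div_iff₀ hDpos] at h1
    linarith
  have hn1 : 1200*(k:ℝ)^2 ≤ (n:ℝ) := by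
    have h1 : (1200*k^2 : ℕ) ≤ n := by omega
    have h2 := (Nat.cast_le (α := ℝ)).mpr h1
    push_cast at h2
    linarith
  have hn2 : 16*(k:ℝ)^2 ≤ γ*(n:ℝ) := by
    have h1 : (Nat.ceil ((16*(k:ℝ)^2)/γ) : ℕ) ≤ n := by omega
    have h2 : ((16*(k:ℝ)^2)/γ) ≤ (n:ℝ) :=
      le_trans (Nat.le_ceil _) ((Nat.cast_le (α := ℝ)).mpr h1)
    rw [div_le_iff₀ hγ] at h2
    nlinarith
  have hset : ∀ X : Finset (Fin n), X.card = l → Finset.univ.filter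
      (fun L' : Finset (Fin n) => L'.card = l ∧
        γ * (n.choose (k - l) : ℝ) ≤
          (((((Finset.powersetCard (k - l) (Finset.univ \ X)).filter
                (fun R => X ∪ R ∈ H))) ∩
            (((Finset.powersetCard (k - l) (Finset.univ \ L')).filter
                (fun R => L' ∪ R ∈ H)))).card : ℝ)) = connSL n k l H γ X := by
    intro X _
    ext t
    rw [connSL, Finset.mem_filter, Finset.mem_filter, Finset.mem_powersetCard_univ]
    simp only [connNB, Finset.mem_univ, true_and]
  have hC' : ∀ X : Finset (Fin n), X.card = l →
      (1 / 2 + γ) * (n.choose l : ℝ) ≤ ((connSL n k l H γ X).card : ℝ) := by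
    intro X hX
    have := hC X hX
    rwa [hset X hX] at this
  exact conn_main_count n k l γ H hk hl1 hl2 hγ hγ1 hγD hn1 hn2 hA hB hC' L R hL hR hLR
end

section
/- Let k ≥ 2, let 0 < ε ≤ 1 be a real, let j be an integer with 1 ≤ j ≤ k−1, and set ε' = √(k^k · ε). Let H and B be k-graphs on the same n-element vertex set V with n ≥ k, and suppose |B∖H| ≤ ε·n^k. Then the number of j-element subsets S of V that are not ε'-good in H with respect to B is at most ε'·n^j. -/
open Finset

/-- Key combinatorial bound: `(k+d)^m ≤ k^m * C(d+m, m)` for `m ≤ k`. -/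
lemma aux_pow_le (k d : ℕ) : ∀ m, m ≤ k → (k + d) ^ m ≤ k ^ m * (d + m).choose m := by
  intro m
  induction m with
  | zero => simp
  | succ m ih =>
    intro hm
    have ih' := ih (Nat.le_of_succ_le hm)
    have hcancel : ((d + m + 1).choose (m + 1)) * (m + 1) = (d + m + 1) * (d + m).choose m := by
      simpa using (Nat.add_one_mul_choose_eq (d + m) m).symm
    have h1 : (k + d) * (m + 1) ≤ k * (d + m + 1) := by nlinarith
    refine Nat.le_of_mul_le_mul_right ?_ (Nat.succ_pos m)
    calc (k + d) ^ (m + 1) * (m + 1) = (k + d) ^ m * ((k + d) * (m + 1)) := by ring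
      _ ≤ (k ^ m * (d + m).choose m) * (k * (d + m + 1)) :=
          Nat.mul_le_mul ih' h1
      _ = k ^ (m + 1) * ((d + m + 1) * (d + m).choose m) := by ring
      _ = k ^ (m + 1) * (d + m + 1).choose (m + 1) * (m + 1) := by rw [← hcancel]; ring

open scoped Classical in
/-- Almost all `j`-sets are `ε'`-good when `H` is `ε`-close to `B`. -/
theorem stmt14 (k : ℕ) (hk : 2 ≤ k) (ε : ℝ) (hε0 : 0 < ε) (hε1 : ε ≤ 1)
    (j : ℕ) (hj1 : 1 ≤ j) (hj2 : j ≤ k - 1) (n : ℕ) (hn : k ≤ n)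
    (H B : Finset (Finset (Fin n)))
    (hH : ∀ e ∈ H, e.card = k) (hB : ∀ e ∈ B, e.card = k)
    (hclose : ((B \ H).card : ℝ) ≤ ε * (n : ℝ) ^ k) :
    ((Finset.univ.filter (fun S : Finset (Fin n) =>
        S.card = j ∧ ¬ IsGood k n H B (Real.sqrt ((k : ℝ) ^ k * ε)) S)).card : ℝ)
      ≤ Real.sqrt ((k : ℝ) ^ k * ε) * (n : ℝ) ^ j := by
  have hjk : j ≤ k := le_trans hj2 (Nat.sub_le k 1)
  set ε' : ℝ := Real.sqrt ((k : ℝ) ^ k * ε) with hε'def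
  have hkpos : (0 : ℝ) < (k : ℝ) ^ k := by positivity
  have hε'pos : 0 < ε' := Real.sqrt_pos.mpr (by positivity)
  have hε'sq : ε' ^ 2 = (k : ℝ) ^ k * ε := Real.sq_sqrt (by positivity)
  set T : Finset (Finset (Fin n)) := B \ H with hT
  set Bad : Finset (Finset (Fin n)) :=
    Finset.univ.filter (fun S : Finset (Fin n) =>
      S.card = j ∧ ¬ IsGood k n H B ε' S) with hBad
  -- the real choose constant
  set C : ℝ := (((n - j).choose (k - j) : ℕ) : ℝ) with hC
  have hCpos : (0 : ℝ) < C := by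
    have : 0 < (n - j).choose (k - j) := Nat.choose_pos (by omega)
    rw [hC]; exact_mod_cast this
  -- each edge of T has card k
  have hTcard : ∀ e ∈ T, e.card = k := by
    intro e he
    exact hB e (Finset.mem_sdiff.mp he).1
  -- double counting
  have hswap : ∑ S ∈ Finset.powersetCard j (Finset.univ : Finset (Fin n)),
      (T.filter (fun e => S ⊆ e)).card = T.card * k.choose j := by
    have h1 : ∀ S : Finset (Fin n), (T.filter (fun e => S ⊆ e)).card
        = ∑ e ∈ T, (if S ⊆ e then 1 else 0) := by
      intro S; rw [Finset.card_filter]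
    calc ∑ S ∈ Finset.powersetCard j (Finset.univ : Finset (Fin n)),
          (T.filter (fun e => S ⊆ e)).card
        = ∑ S ∈ Finset.powersetCard j (Finset.univ : Finset (Fin n)),
            ∑ e ∈ T, (if S ⊆ e then 1 else 0) := by
          exact Finset.sum_congr rfl (fun S _ => h1 S)
      _ = ∑ e ∈ T, ∑ S ∈ Finset.powersetCard j (Finset.univ : Finset (Fin n)),
            (if S ⊆ e then 1 else 0) := Finset.sum_comm
      _ = ∑ e ∈ T, k.choose j := by
          refine Finset.sum_congr rfl (fun e he => ?_)
          rw [← Finset.card_filter]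
          have : (Finset.powersetCard j (Finset.univ : Finset (Fin n))).filter
              (fun S => S ⊆ e) = Finset.powersetCard j e := by
            ext S
            simp [Finset.mem_powersetCard, Finset.mem_filter]
            tauto
          rw [this, Finset.card_powersetCard, hTcard e he]
      _ = T.card * k.choose j := by rw [Finset.sum_const, smul_eq_mul]
  -- Bad ⊆ powersetCard j univ
  have hsub : Bad ⊆ Finset.powersetCard j (Finset.univ : Finset (Fin n)) := by
    intro S hS
    rw [hBad, Finset.mem_filter] at hS
    rw [Finset.mem_powersetCard]
    exact ⟨Finset.subset_univ S, hS.2.1⟩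
  -- lower bound per bad set
  have hlow : ∀ S ∈ Bad, ε' * C ≤ ((T.filter (fun e => S ⊆ e)).card : ℝ) := by
    intro S hS
    rw [hBad, Finset.mem_filter] at hS
    obtain ⟨-, hScard, hnotgood⟩ := hS
    rw [IsGood, not_le, hScard] at hnotgood
    exact le_of_lt hnotgood
  -- summing
  have hsum1 : (Bad.card : ℝ) * (ε' * C)
      ≤ ∑ S ∈ Bad, ((T.filter (fun e => S ⊆ e)).card : ℝ) := by
    calc (Bad.card : ℝ) * (ε' * C) = ∑ _S ∈ Bad, ε' * C := by
          rw [Finset.sum_const, nsmul_eq_mul]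
      _ ≤ _ := Finset.sum_le_sum hlow
  have hsum2 : ∑ S ∈ Bad, ((T.filter (fun e => S ⊆ e)).card : ℝ)
      ≤ (T.card : ℝ) * (k.choose j : ℝ) := by
    have := Finset.sum_le_sum_of_subset (f := fun S => (T.filter (fun e => S ⊆ e)).card) hsub
    calc ∑ S ∈ Bad, ((T.filter (fun e => S ⊆ e)).card : ℝ)
        = ((∑ S ∈ Bad, (T.filter (fun e => S ⊆ e)).card : ℕ) : ℝ) := by push_cast; rfl
      _ ≤ ((∑ S ∈ Finset.powersetCard j (Finset.univ : Finset (Fin n)),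
            (T.filter (fun e => S ⊆ e)).card : ℕ) : ℝ) := by exact_mod_cast this
      _ = (T.card : ℝ) * (k.choose j : ℝ) := by rw [hswap]; push_cast; ring
  -- arithmetic bound: n^k * C(k,j) ≤ k^k * C(n-j,k-j) * n^j, over ℕ
  have hnat : n ^ k * k.choose j ≤ k ^ k * (n - j).choose (k - j) * n ^ j := by
    obtain ⟨d, hd⟩ := Nat.exists_eq_add_of_le hn
    have h1 : n ^ (k - j) ≤ k ^ (k - j) * (n - j).choose (k - j) := by
      have := aux_pow_le k d (k - j) (Nat.sub_le k j)
      have hrw : d + (k - j) = n - j := by omega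
      rw [hrw] at this
      have hrw2 : k + d = n := hd.symm
      rwa [hrw2] at this
    have h2 : k.choose j ≤ k ^ j := Nat.choose_le_pow k j
    calc n ^ k * k.choose j = n ^ j * n ^ (k - j) * k.choose j := by
          rw [← pow_add]; congr 2; omega
      _ ≤ n ^ j * (k ^ (k - j) * (n - j).choose (k - j)) * k ^ j :=
          Nat.mul_le_mul (Nat.mul_le_mul_left _ h1) h2
      _ = (k ^ j * k ^ (k - j)) * (n - j).choose (k - j) * n ^ j := by ring
      _ = k ^ k * (n - j).choose (k - j) * n ^ j := by
          rw [← pow_add]; congr 3; omega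
  have hreal : (T.card : ℝ) * (k.choose j : ℝ) ≤ ε' * (ε' * C * (n : ℝ) ^ j) := by
    have hnatR : ((n : ℝ)) ^ k * (k.choose j : ℝ)
        ≤ (k : ℝ) ^ k * C * (n : ℝ) ^ j := by rw [hC]; exact_mod_cast hnat
    have h3 : (T.card : ℝ) * (k.choose j : ℝ) ≤ ε * (n : ℝ) ^ k * (k.choose j : ℝ) := by
      apply mul_le_mul_of_nonneg_right hclose (by positivity)
    calc (T.card : ℝ) * (k.choose j : ℝ) ≤ ε * ((n : ℝ) ^ k * (k.choose j : ℝ)) := by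
          linarith [h3]
      _ ≤ ε * ((k : ℝ) ^ k * C * (n : ℝ) ^ j) :=
          mul_le_mul_of_nonneg_left hnatR (le_of_lt hε0)
      _ = ((k : ℝ) ^ k * ε) * C * (n : ℝ) ^ j := by ring
      _ = ε' ^ 2 * C * (n : ℝ) ^ j := by rw [hε'sq]
      _ = ε' * (ε' * C * (n : ℝ) ^ j) := by ring
  -- combine
  have hfinal : (Bad.card : ℝ) * (ε' * C) ≤ (ε' * (n : ℝ) ^ j) * (ε' * C) := by
    calc (Bad.card : ℝ) * (ε' * C) ≤ (T.card : ℝ) * (k.choose j : ℝ) :=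
          le_trans hsum1 hsum2
      _ ≤ ε' * (ε' * C * (n : ℝ) ^ j) := hreal
      _ = (ε' * (n : ℝ) ^ j) * (ε' * C) := by ring
  have := le_of_mul_le_mul_right hfinal (by positivity : (0:ℝ) < ε' * C)
  exact this
end

section
/- Let k ≥ 2 and let V = A ∪̇ B be a partition of an n-element set, and let B denote either B_{n,k}(A,B) or B̄_{n,k}(A,B). Let H be a k-graph on V, let j be an integer with 1 ≤ j ≤ k−1, let 0 < α_1, α_2 < 1 be reals, and let S_1, S_2 ⊆ V be disjoint j-element sets such that S_i is α_i-good in H with respect to B for i = 1,2 and |S_1 ∩ A| ≡ |S_2 ∩ A| (mod 2). Then the number of (k−j)-element sets T ⊆ V∖(S_1∪S_2) with both T∪S_1 ∈ H∩B and T∪S_2 ∈ H∩B is at least δ_j(B) − α_1·C(n−j, k−j) − α_2·C(n−j, k−j) − 2j·C(n−1, k−j−1). -/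
open Finset

/-- Good sets of the same parity are connected by many edges of `H ∩ B`. -/
theorem stmt15 (k : ℕ) (hk : 2 ≤ k) (n : ℕ) (A : Finset (Fin n))
    (Bg : Finset (Finset (Fin n))) (hBg : Bg = oddB k A ∨ Bg = evenB k A)
    (H : Finset (Finset (Fin n))) (hH : ∀ e ∈ H, e.card = k)
    (j : ℕ) (hj1 : 1 ≤ j) (hj2 : j ≤ k - 1)
    (a1 a2 : ℝ) (ha1 : 0 < a1) (ha1' : a1 < 1) (ha2 : 0 < a2) (ha2' : a2 < 1)
    (S1 S2 : Finset (Fin n)) (hS1 : S1.card = j) (hS2 : S2.card = j)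
    (hdisj : Disjoint S1 S2)
    (hg1 : IsGood k n H Bg a1 S1) (hg2 : IsGood k n H Bg a2 S2)
    (hpar : (S1 ∩ A).card % 2 = (S2 ∩ A).card % 2) :
    (minDeg k j Bg : ℝ) - a1 * ((n - j).choose (k - j) : ℝ)
        - a2 * ((n - j).choose (k - j) : ℝ)
        - 2 * j * ((n - 1).choose (k - j - 1) : ℝ)
      ≤ (((Finset.powersetCard (k - j) (Finset.univ \ (S1 ∪ S2))).filter
            (fun T => S1 ∪ T ∈ H ∩ Bg ∧ S2 ∪ T ∈ H ∩ Bg)).card : ℝ) := by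
  classical
  have hjk : j < k := by omega
  have hadd : j + (k - j) = k := by omega
  -- basic membership facts
  set D0 := (Finset.powersetCard (k - j) (Finset.univ \ S1)).filter
      (fun T => S1 ∪ T ∈ Bg) with hD0
  set G := (Finset.powersetCard (k - j) (Finset.univ \ (S1 ∪ S2))).filter
      (fun T => S1 ∪ T ∈ H ∩ Bg ∧ S2 ∪ T ∈ H ∩ Bg) with hG
  have hD0mem : ∀ T ∈ D0, Disjoint S1 T ∧ T.card = k - j ∧ S1 ∪ T ∈ Bg := by
    intro T hT
    rw [hD0, Finset.mem_filter, Finset.mem_powersetCard] at hT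
    refine ⟨?_, hT.1.2, hT.2⟩
    have := hT.1.1
    rw [Finset.subset_sdiff] at this
    exact this.2.symm
  -- parity transfer
  have hparity : ∀ T : Finset (Fin n), Disjoint S1 T → Disjoint S2 T →
      T.card = k - j → S1 ∪ T ∈ Bg → S2 ∪ T ∈ Bg := by
    intro T h1 h2 hT hmem
    have hc2 : (S2 ∪ T).card = k := by
      rw [Finset.card_union_of_disjoint h2, hS2, hT]; omega
    have hi1 : ((S1 ∪ T) ∩ A).card = (S1 ∩ A).card + (T ∩ A).card := by
      rw [Finset.union_inter_distrib_right,
        Finset.card_union_of_disjoint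
          (h1.mono Finset.inter_subset_left Finset.inter_subset_left)]
    have hi2 : ((S2 ∪ T) ∩ A).card = (S2 ∩ A).card + (T ∩ A).card := by
      rw [Finset.union_inter_distrib_right,
        Finset.card_union_of_disjoint
          (h2.mono Finset.inter_subset_left Finset.inter_subset_left)]
    rcases hBg with rfl | rfl
    · simp only [oddB, Finset.mem_filter, Finset.mem_powersetCard] at hmem ⊢
      refine ⟨⟨Finset.subset_univ _, hc2⟩, ?_⟩
      have h := hmem.2
      rw [hi1, Nat.odd_iff] at h
      rw [hi2, Nat.odd_iff]
      omega
    · simp only [evenB, Finset.mem_filter, Finset.mem_powersetCard] at hmem ⊢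
      refine ⟨⟨Finset.subset_univ _, hc2⟩, ?_⟩
      have h := hmem.2
      rw [hi1, Nat.even_iff] at h
      rw [hi2, Nat.even_iff]
      omega
  -- minimum degree bound
  have hmin : minDeg k j Bg ≤ D0.card := by
    apply Nat.sInf_le
    exact ⟨S1, hS1, by rw [hDeg, hS1, hD0]⟩
  -- the three exceptional sets
  set X := D0.filter (fun T => ¬ Disjoint S2 T) with hX
  set Y := D0.filter (fun T => Disjoint S2 T ∧ S1 ∪ T ∉ H) with hY
  set Z := D0.filter (fun T => Disjoint S2 T ∧ S1 ∪ T ∈ H ∧ S2 ∪ T ∉ H) with hZ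
  have hsub : D0 ⊆ G ∪ X ∪ Y ∪ Z := by
    intro T hT
    obtain ⟨hd1, hTc, hBgm⟩ := hD0mem T hT
    by_cases h2 : Disjoint S2 T
    · by_cases hH1 : S1 ∪ T ∈ H
      · by_cases hH2 : S2 ∪ T ∈ H
        · have hGm : T ∈ G := by
            rw [hG, Finset.mem_filter, Finset.mem_powersetCard]
            refine ⟨⟨?_, hTc⟩, ?_, ?_⟩
            · rw [Finset.subset_sdiff]
              exact ⟨Finset.subset_univ _, (Finset.disjoint_union_right.mpr
                ⟨hd1.symm, h2.symm⟩).symm.symm⟩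
            · exact Finset.mem_inter.mpr ⟨hH1, hBgm⟩
            · exact Finset.mem_inter.mpr ⟨hH2, hparity T hd1 h2 hTc hBgm⟩
          simp [Finset.mem_union, hGm]
        · have : T ∈ Z := by rw [hZ, Finset.mem_filter]; exact ⟨hT, h2, hH1, hH2⟩
          simp [Finset.mem_union, this]
      · have : T ∈ Y := by rw [hY, Finset.mem_filter]; exact ⟨hT, h2, hH1⟩
        simp [Finset.mem_union, this]
    · have : T ∈ X := by rw [hX, Finset.mem_filter]; exact ⟨hT, h2⟩
      simp [Finset.mem_union, this]
  have hcard : D0.card ≤ G.card + X.card + Y.card + Z.card := by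
    have h1 := Finset.card_le_card hsub
    have h2 := Finset.card_union_le (G ∪ X ∪ Y) Z
    have h3 := Finset.card_union_le (G ∪ X) Y
    have h4 := Finset.card_union_le G X
    omega
  -- bound on X
  have hXcard : X.card ≤ j * (n - 1).choose (k - j - 1) := by
    have hXsub : X ⊆ S2.biUnion (fun v => X.filter (fun T => v ∈ T)) := by
      intro T hT
      have h2 : ¬ Disjoint S2 T := by
        rw [hX, Finset.mem_filter] at hT; exact hT.2
      rw [Finset.not_disjoint_iff] at h2
      obtain ⟨v, hv1, hv2⟩ := h2
      exact Finset.mem_biUnion.mpr ⟨v, hv1, Finset.mem_filter.mpr ⟨hT, hv2⟩⟩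
    have hfv : ∀ v ∈ S2, (X.filter (fun T => v ∈ T)).card ≤ (n - 1).choose (k - j - 1) := by
      intro v _
      have hle : (X.filter (fun T => v ∈ T)).card ≤
          (Finset.powersetCard (k - j - 1) ((Finset.univ : Finset (Fin n)).erase v)).card := by
        apply Finset.card_le_card_of_injOn (fun T => T.erase v)
        · intro T hT
          simp only [Finset.mem_coe] at hT ⊢
          rw [Finset.mem_filter] at hT
          obtain ⟨hTX, hvT⟩ := hT
          have hTc : T.card = k - j := (hD0mem T (by
            rw [hX, Finset.mem_filter] at hTX; exact hTX.1)).2.1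
          rw [Finset.mem_powersetCard]
          constructor
          · exact Finset.erase_subset_erase v (Finset.subset_univ T)
          · rw [Finset.card_erase_of_mem hvT, hTc]
        · intro T hT T' hT' h
          rw [Finset.mem_coe, Finset.mem_filter] at hT hT'
          have h' : T.erase v = T'.erase v := h
          have : insert v (T.erase v) = insert v (T'.erase v) := by rw [h']
          rwa [Finset.insert_erase hT.2, Finset.insert_erase hT'.2] at this
      rwa [Finset.card_powersetCard, Finset.card_erase_of_mem (Finset.mem_univ v),
        Finset.card_univ, Fintype.card_fin] at hle
    calc X.card ≤ (S2.biUnion (fun v => X.filter (fun T => v ∈ T))).card :=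
          Finset.card_le_card hXsub
      _ ≤ ∑ v ∈ S2, (X.filter (fun T => v ∈ T)).card := Finset.card_biUnion_le
      _ ≤ ∑ v ∈ S2, (n - 1).choose (k - j - 1) := Finset.sum_le_sum hfv
      _ = j * (n - 1).choose (k - j - 1) := by rw [Finset.sum_const, hS2, smul_eq_mul]
  -- bound on Y
  have hYcard : Y.card ≤ ((Bg \ H).filter (fun e => S1 ⊆ e)).card := by
    apply Finset.card_le_card_of_injOn (fun T => S1 ∪ T)
    · intro T hT
      simp only [Finset.mem_coe] at hT ⊢
      rw [hY, Finset.mem_filter] at hT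
      obtain ⟨hTD, _, hnH⟩ := hT
      obtain ⟨_, _, hBgm⟩ := hD0mem T hTD
      rw [Finset.mem_filter, Finset.mem_sdiff]
      exact ⟨⟨hBgm, hnH⟩, Finset.subset_union_left⟩
    · intro T hT T' hT' h
      rw [Finset.mem_coe, hY, Finset.mem_filter] at hT hT'
      have d : Disjoint S1 T := (hD0mem T hT.1).1
      have d' : Disjoint S1 T' := (hD0mem T' hT'.1).1
      have h' : S1 ∪ T = S1 ∪ T' := h
      have : (S1 ∪ T) \ S1 = (S1 ∪ T') \ S1 := by rw [h']
      rwa [Finset.union_sdiff_cancel_left d, Finset.union_sdiff_cancel_left d'] at this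
  -- bound on Z
  have hZcard : Z.card ≤ ((Bg \ H).filter (fun e => S2 ⊆ e)).card := by
    apply Finset.card_le_card_of_injOn (fun T => S2 ∪ T)
    · intro T hT
      simp only [Finset.mem_coe] at hT ⊢
      rw [hZ, Finset.mem_filter] at hT
      obtain ⟨hTD, h2, _, hnH⟩ := hT
      obtain ⟨hd1, hTc, hBgm⟩ := hD0mem T hTD
      rw [Finset.mem_filter, Finset.mem_sdiff]
      exact ⟨⟨hparity T hd1 h2 hTc hBgm, hnH⟩, Finset.subset_union_left⟩
    · intro T hT T' hT' h
      rw [Finset.mem_coe, hZ, Finset.mem_filter] at hT hT'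
      have d : Disjoint S2 T := hT.2.1
      have d' : Disjoint S2 T' := hT'.2.1
      have h' : S2 ∪ T = S2 ∪ T' := h
      have : (S2 ∪ T) \ S2 = (S2 ∪ T') \ S2 := by rw [h']
      rwa [Finset.union_sdiff_cancel_left d, Finset.union_sdiff_cancel_left d'] at this
  -- combine with goodness
  rw [IsGood, hS1] at hg1
  rw [IsGood, hS2] at hg2
  have hYreal : (Y.card : ℝ) ≤ a1 * ((n - j).choose (k - j) : ℝ) :=
    le_trans (by exact_mod_cast hYcard) hg1
  have hZreal : (Z.card : ℝ) ≤ a2 * ((n - j).choose (k - j) : ℝ) :=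
    le_trans (by exact_mod_cast hZcard) hg2
  have hXreal : (X.card : ℝ) ≤ (j : ℝ) * ((n - 1).choose (k - j - 1) : ℝ) := by
    exact_mod_cast hXcard
  have hminreal : (minDeg k j Bg : ℝ) ≤ (D0.card : ℝ) := by exact_mod_cast hmin
  have hcardreal : (D0.card : ℝ) ≤ (G.card : ℝ) + X.card + Y.card + Z.card := by
    exact_mod_cast hcard
  have hC' : (0:ℝ) ≤ ((n - 1).choose (k - j - 1) : ℝ) := Nat.cast_nonneg _
  have hjnn : (0:ℝ) ≤ (j : ℝ) := Nat.cast_nonneg _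
  nlinarith [mul_nonneg hjnn hC']
end
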